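/- arXiv:2308.16004 — 5 statements merged into one kernel-verified Lean document; each statement's English description precedes it below -/
import Mathlib

section
/- Let κ ≤ 0 ≤ K be real numbers, set K_m = max(|κ|, |K|), and assume K_m > 0. Define s(κ,b) = sinh(√(-κ)·b)/√(-κ) if κ < 0 and s(κ,b) = b if κ = 0, and S(K,b) = sin(√K·b)/√K if K > 0 and S(K,b) = b if K = 0. Then for all b with 0 < b ≤ 1/√K_m, we have s(κ,b)/S(K,b) ≤ 3. -/
/-! On `0 < b ≤ 1/√K_m` both arguments `√(-κ) b` and `√K b` lie in `[0, 1]`, where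
`sinh x ≤ 3x/2` (from `|exp x - 1| ≤ 2|x|`) and `sin x ≥ x - x³/6 ≥ 5x/6`. Hence
`s(κ,b) ≤ 3b/2` and `S(K,b) ≥ 5b/6`, so the ratio is at most `9/5`. -/

noncomputable def jacobiLower (κ b : ℝ) : ℝ :=
  if κ < 0 then Real.sinh (Real.sqrt (-κ) * b) / Real.sqrt (-κ) else b

noncomputable def jacobiUpper (K b : ℝ) : ℝ :=
  if 0 < K then Real.sin (Real.sqrt K * b) / Real.sqrt K else b

namespace Real

lemma sinh_le_three_halves_mul {x : ℝ} (h0 : 0 ≤ x) (h1 : x ≤ 1) : sinh x ≤ 3 / 2 * x := by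
  have hexp : exp x - 1 ≤ 2 * x := by
    have h := abs_exp_sub_one_le (x := x) (by rwa [abs_of_nonneg h0])
    rw [abs_of_nonneg h0] at h
    exact (le_abs_self _).trans h
  have hexp_neg : 1 - x ≤ exp (-x) := by linarith [add_one_le_exp (-x)]
  rw [sinh_eq]
  linarith

lemma five_sixths_mul_le_sin {x : ℝ} (h0 : 0 ≤ x) (h1 : x ≤ 1) : 5 / 6 * x ≤ sin x := by
  have hcube : x ^ 3 ≤ x := pow_le_of_le_one h0 h1 (by norm_num)
  linarith [sin_ge_sub_cube h0]

lemma sqrt_mul_le_one_of_le_one_div_sqrt {a m b : ℝ} (hb : 0 < b) (hbm : b ≤ 1 / √m)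
    (ham : a ≤ m) : √a * b ≤ 1 := by
  have hm : 0 < √m := by
    by_contra! h
    rw [le_antisymm h (sqrt_nonneg m), div_zero] at hbm
    linarith
  calc √a * b ≤ √m * b := by gcongr
    _ ≤ 1 := by rwa [le_div_iff₀ hm, mul_comm] at hbm

end Real

open Real

lemma jacobiLower_le {κ b : ℝ} (hb : 0 ≤ b) (hκb : √|κ| * b ≤ 1) :
    jacobiLower κ b ≤ 3 / 2 * b := by
  unfold jacobiLower
  split_ifs with hκ
  · rw [abs_of_neg hκ] at hκb
    have hs : 0 < √(-κ) := sqrt_pos.2 (neg_pos.2 hκ)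
    rw [div_le_iff₀ hs]
    linarith [sinh_le_three_halves_mul (by positivity) hκb]
  · linarith

lemma five_sixths_mul_le_jacobiUpper {K b : ℝ} (hb : 0 ≤ b) (hKb : √|K| * b ≤ 1) :
    5 / 6 * b ≤ jacobiUpper K b := by
  unfold jacobiUpper
  split_ifs with hK
  · rw [abs_of_pos hK] at hKb
    have hs : 0 < √K := sqrt_pos.2 hK
    rw [le_div_iff₀ hs]
    linarith [five_sixths_mul_le_sin (by positivity) hKb]
  · linarith

theorem jacobi_ratio_le_three_general (κ K : ℝ) (b : ℝ) (hb0 : 0 < b)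
    (hb1 : b ≤ 1 / Real.sqrt (max |κ| |K|)) :
    jacobiLower κ b / jacobiUpper K b ≤ 3 := by
  have hlow := jacobiLower_le hb0.le
    (sqrt_mul_le_one_of_le_one_div_sqrt hb0 hb1 (le_max_left _ _))
  have hup := five_sixths_mul_le_jacobiUpper hb0.le
    (sqrt_mul_le_one_of_le_one_div_sqrt hb0 hb1 (le_max_right _ _))
  rw [div_le_iff₀ (by linarith)]
  linarith

theorem jacobi_ratio_le_three (κ K : ℝ) (hκ : κ ≤ 0) (hK : 0 ≤ K)
    (hKm : 0 < max |κ| |K|) (b : ℝ) (hb0 : 0 < b)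
    (hb1 : b ≤ 1 / Real.sqrt (max |κ| |K|)) :
    jacobiLower κ b / jacobiUpper K b ≤ 3 :=
  jacobi_ratio_le_three_general κ K b hb0 hb1
end

section
/- For all real t with 0 < t < π/2, we have (1 + 2t²)·t ≤ 4·tan(t). -/
/-! The cubic Taylor bound `t + t³/3 ≤ tan t` holds on `[0, π/2)`, because the derivative of
`tan t - t - t³/3` is `tan² t - t² ≥ 0`. It reduces the claim to `(1 + 2t²) t ≤ 4t + 4t³/3`,
i.e. `t² ≤ 9/2`, which holds since `t < π/2 < 1.6`. -/

open Real Set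

theorem hasDerivAt_tan_sub_id_sub_pow_three_div_three {x : ℝ} (hx : cos x ≠ 0) :
    HasDerivAt (fun y => tan y - y - y ^ 3 / 3) (tan x ^ 2 - x ^ 2) x := by
  have h := ((hasDerivAt_tan hx).fun_sub (hasDerivAt_id' x)).fun_sub
    ((hasDerivAt_pow 3 x).div_const 3)
  rw [one_div, ← inv_one_add_tan_sq hx, inv_inv] at h
  exact h.congr_deriv (by push_cast; ring)

theorem add_pow_three_div_three_le_tan {x : ℝ} (hx0 : 0 ≤ x) (hx1 : x < π / 2) :
    x + x ^ 3 / 3 ≤ tan x := by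
  have cos_ne_zero {y : ℝ} (hy : y ∈ Icc 0 x) : cos y ≠ 0 :=
    (cos_pos_of_mem_Ioo ⟨by linarith [pi_pos, hy.1], hy.2.trans_lt hx1⟩).ne'
  have mono : MonotoneOn (fun y => tan y - y - y ^ 3 / 3) (Icc 0 x) := by
    refine monotoneOn_of_hasDerivWithinAt_nonneg (convex_Icc 0 x)
      (fun y hy => (hasDerivAt_tan_sub_id_sub_pow_three_div_three
        (cos_ne_zero hy)).continuousAt.continuousWithinAt)
      (fun y hy => (hasDerivAt_tan_sub_id_sub_pow_three_div_three
        (cos_ne_zero (interior_subset hy))).hasDerivWithinAt) fun y hy => ?_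
    rw [interior_Icc] at hy
    have y_le_tan : y ≤ tan y := le_tan hy.1.le (hy.2.trans hx1)
    nlinarith [hy.1]
  have at_zero_le := mono (left_mem_Icc.mpr hx0) (right_mem_Icc.mpr hx0) hx0
  simp only [tan_zero] at at_zero_le
  linarith

theorem mul_le_four_tan (t : ℝ) (ht0 : 0 < t) (ht1 : t < Real.pi / 2) :
    (1 + 2 * t ^ 2) * t ≤ 4 * Real.tan t := by
  have ht_sq : t ^ 2 ≤ 9 / 2 := by nlinarith [pi_lt_d2]
  calc (1 + 2 * t ^ 2) * t ≤ 4 * (t + t ^ 3 / 3) := by nlinarith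
    _ ≤ 4 * tan t := by gcongr; exact add_pow_three_div_three_le_tan ht0.le ht1
end

section
/- Define the sequence (A_t) of nonnegative reals by A_0 = 0 and A_t = (0.5 + 2·A_{t-1})²·(0.3 + A_{t-1}) for t ≥ 1. Then (A_t) is strictly increasing from t = 0 and tends to infinity as t → ∞. -/
/-!
For `x ≥ 0` the map `f x = (1/2 + 2x)² (3/10 + x)` satisfies
`f x - x = 3/40 - 3x/20 + 16x²/5 + 4x³ ≥ 0.07`, the quadratic part having negative discriminant.
So the sequence stays nonnegative and gains at least `0.07` per step, hence grows at least linearly.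
-/

open Filter

section
variable {α : Type*} [Field α] [LinearOrder α] [IsStrictOrderedRing α]

lemma add_mul_le_of_add_le_succ {u : ℕ → α} {c : α} (h : ∀ n, u n + c ≤ u (n + 1)) (n : ℕ) :
    u 0 + n * c ≤ u n := by
  induction n with
  | zero => simp
  | succ n ih => push_cast; linarith [h n]

lemma strictMono_of_add_le_succ {u : ℕ → α} {c : α} (hc : 0 < c) (h : ∀ n, u n + c ≤ u (n + 1)) :
    StrictMono u :=
  strictMono_nat_of_lt_succ fun n => by linarith [h n]

lemma tendsto_atTop_of_add_le_succ [Archimedean α] {u : ℕ → α} {c : α} (hc : 0 < c)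
    (h : ∀ n, u n + c ≤ u (n + 1)) : Tendsto u atTop atTop :=
  tendsto_atTop_mono (add_mul_le_of_add_le_succ h) <|
    tendsto_atTop_add_const_left _ _ (tendsto_natCast_atTop_atTop.atTop_mul_const hc)
end

def distortionStep (x : ℝ) : ℝ := (0.5 + 2 * x) ^ 2 * (0.3 + x)

lemma distortionStep_nonneg {x : ℝ} (hx : 0 ≤ x) : 0 ≤ distortionStep x := by
  unfold distortionStep; positivity

lemma add_le_distortionStep {x : ℝ} (hx : 0 ≤ x) : x + 0.07 ≤ distortionStep x := by
  have key : distortionStep x - x = 0.075 - 0.15 * x + 3.2 * x ^ 2 + 4 * x ^ 3 := by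
    unfold distortionStep; ring
  -- `0.0234375` is the vertex of `3.2 x² - 0.15 x`
  nlinarith [sq_nonneg (x - 0.0234375), pow_nonneg hx 3]

theorem corrected_distortion_diverges (A : ℕ → ℝ) (h0 : A 0 = 0)
    (hrec : ∀ t : ℕ, A (t + 1) = (0.5 + 2 * A t) ^ 2 * (0.3 + A t)) :
    StrictMono A ∧ Filter.Tendsto A Filter.atTop Filter.atTop := by
  have hnonneg : ∀ t, 0 ≤ A t := by
    intro t
    induction t with
    | zero => exact h0.ge
    | succ t ih => exact (hrec t).trans_ge (distortionStep_nonneg ih)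
  have hstep : ∀ t, A t + 0.07 ≤ A (t + 1) := fun t =>
    (hrec t).symm ▸ add_le_distortionStep (hnonneg t)
  exact ⟨strictMono_of_add_le_succ (by norm_num) hstep,
    tendsto_atTop_of_add_le_succ (by norm_num) hstep⟩
end

section
/- Let H be a real inner product space, let F : H → H be L-Lipschitz with L > 0, and let 0 < η ≤ 1/(8L). Define z_1 = z_0 = z_{-1} and z_{t+1} = z_t − η·(2·F(z_t) − F(z_{t-1})) for t ≥ 0. Then for every t ≥ 0, (1/2)·‖F(z_t)‖ ≤ ‖F(z_{t+1})‖ ≤ (3/2)·‖F(z_t)‖. -/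
/-!
By the Lipschitz bound, `‖F z_{t+1} - F z_t‖ ≤ Lη ‖2 F z_t - F z_{t-1}‖`, and the lower ratio bound
of the previous step, `‖F z_{t-1}‖ ≤ 2 ‖F z_t‖`, turns this into `≤ 4Lη ‖F z_t‖ ≤ ½ ‖F z_t‖`.
The reverse triangle inequality then gives both ratio bounds at step `t`, closing the induction.
-/

theorem norm_bounds_of_norm_sub_le_half {E : Type*} [SeminormedAddCommGroup E] {a b : E}
    (h : ‖b - a‖ ≤ 1 / 2 * ‖a‖) : 1 / 2 * ‖a‖ ≤ ‖b‖ ∧ ‖b‖ ≤ 3 / 2 * ‖a‖ := by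
  have hab := norm_sub_norm_le a b
  have hba := norm_sub_norm_le b a
  rw [norm_sub_rev] at hab
  constructor <;> linarith

theorem norm_two_smul_sub_le {E : Type*} [SeminormedAddCommGroup E] {a b : E}
    (h : ‖b‖ ≤ 2 * ‖a‖) : ‖2 • a - b‖ ≤ 4 * ‖a‖ :=
  calc ‖2 • a - b‖ ≤ ‖2 • a‖ + ‖b‖ := norm_sub_le _ _
    _ ≤ 2 * ‖a‖ + ‖b‖ := by gcongr; exact_mod_cast norm_nsmul_le (n := 2) (a := a)
    _ ≤ 4 * ‖a‖ := by linarith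

section OGDA

variable {E : Type*} [SeminormedAddCommGroup E] [NormedSpace ℝ E] {F : E → E} {L η : ℝ}

def ogdaStep (F : E → E) (η : ℝ) (x w : E) : E :=
  x - η • (2 • F x - F w)

theorem norm_sub_apply_ogdaStep_le (hlip : ∀ x y, ‖F x - F y‖ ≤ L * ‖x - y‖) (hη : 0 ≤ η)
    (x w : E) : ‖F (ogdaStep F η x w) - F x‖ ≤ L * η * ‖2 • F x - F w‖ :=
  calc ‖F (ogdaStep F η x w) - F x‖ ≤ L * ‖ogdaStep F η x w - x‖ := hlip _ _
    _ = L * η * ‖2 • F x - F w‖ := by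
      rw [ogdaStep, sub_sub_cancel_left, norm_neg, norm_smul, Real.norm_of_nonneg hη, mul_assoc]

theorem norm_sub_apply_ogdaStep_le_half (hlip : ∀ x y, ‖F x - F y‖ ≤ L * ‖x - y‖)
    (hη : 0 ≤ η) (hLη : L * η ≤ 1 / 8) {x w : E} (hw : ‖F w‖ ≤ 2 * ‖F x‖) :
    ‖F (ogdaStep F η x w) - F x‖ ≤ 1 / 2 * ‖F x‖ :=
  calc ‖F (ogdaStep F η x w) - F x‖ ≤ L * η * ‖2 • F x - F w‖ :=
        norm_sub_apply_ogdaStep_le hlip hη x w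
    _ ≤ 1 / 8 * (4 * ‖F x‖) :=
        mul_le_mul hLη (norm_two_smul_sub_le hw) (norm_nonneg _) (by norm_num)
    _ = 1 / 2 * ‖F x‖ := by ring

end OGDA

theorem ogda_gradient_norm_ratio {H : Type*} [NormedAddCommGroup H]
    [InnerProductSpace ℝ H] (F : H → H) (L η : ℝ) (hL : 0 < L)
    (hlip : ∀ x y : H, ‖F x - F y‖ ≤ L * ‖x - y‖)
    (hη0 : 0 < η) (hη : η ≤ 1 / (8 * L)) (z : ℤ → H)
    (hinit : z (-1) = z 0 ∧ z 0 = z 1)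
    (hrec : ∀ t : ℤ, 1 ≤ t → z (t + 1) = z t - η • (2 • F (z t) - F (z (t - 1)))) :
    ∀ t : ℤ, 0 ≤ t →
      (1 / 2) * ‖F (z t)‖ ≤ ‖F (z (t + 1))‖ ∧ ‖F (z (t + 1))‖ ≤ (3 / 2) * ‖F (z t)‖ := by
  have hLη : L * η ≤ 1 / 8 := by
    rw [le_div_iff₀ (by positivity)] at hη
    linarith
  refine Int.leInduction ?_ fun t ht ih => ?_
  · rw [zero_add, ← hinit.2]
    exact norm_bounds_of_norm_sub_le_half (by simp)
  · have hstep : z (t + 1 + 1) = ogdaStep F η (z (t + 1)) (z t) := by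
      rw [hrec (t + 1) (by omega), add_sub_cancel_right, ogdaStep]
    rw [hstep]
    exact norm_bounds_of_norm_sub_le_half
      (norm_sub_apply_ogdaStep_le_half hlip hη0.le hLη (by linarith [ih.1]))
end

section
/- Let H be a real inner product space, let F : H → H be L-Lipschitz with L > 0, let 0 < η ≤ 1/(20L), and define z_1 = z_0 = z_{-1} and z_{t+1} = z_t − η·(2·F(z_t) − F(z_{t-1})) for t ≥ 0. Then for every t ≥ 2, ‖z_t − z_{t-1}‖ ≤ (1 + 8Lη)·η·‖F(z_{t-1})‖ ≤ 2η·‖F(z_{t-1})‖. -/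
/-!
Write `d_t = ‖z_t - z_{t-1}‖` and `c = 1 + 8Lη`. Each step satisfies
`d_{t+1} ≤ η ‖F z_t‖ + η ‖F z_t - F z_{t-1}‖ ≤ η ‖F z_t‖ + ηL d_t`. If `d_t ≤ cη ‖F z_{t-1}‖`, then
`‖F z_{t-1}‖ ≤ ‖F z_t‖ + L d_t` and `cLη ≤ 1/2` give `‖F z_{t-1}‖ ≤ 2 ‖F z_t‖`, hence
`d_t ≤ 4η ‖F z_t‖` and `d_{t+1} ≤ (1 + 4Lη) η ‖F z_t‖ ≤ cη ‖F z_t‖`. The induction starts from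
`d_1 = 0`, as the iteration starts at rest.
-/

theorem norm_le_two_mul_of_norm_sub_le {E E' : Type*} [SeminormedAddCommGroup E]
    [SeminormedAddCommGroup E'] {f : E → E'} {L r : ℝ} {x y : E} (hL : 0 ≤ L)
    (hf : ‖f x - f y‖ ≤ L * ‖x - y‖) (hxy : ‖x - y‖ ≤ r * ‖f y‖) (hLr : L * r ≤ 1 / 2) :
    ‖f y‖ ≤ 2 * ‖f x‖ := by
  have hfy : ‖f y‖ ≤ ‖f x‖ + L * r * ‖f y‖ :=
    calc ‖f y‖ ≤ ‖f x‖ + ‖f x - f y‖ := norm_le_norm_add_norm_sub _ _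
      _ ≤ ‖f x‖ + L * (r * ‖f y‖) := by gcongr; exact hf.trans (by gcongr)
      _ = ‖f x‖ + L * r * ‖f y‖ := by ring
  nlinarith [norm_nonneg (f y)]

theorem norm_smul_two_nsmul_sub_le {H : Type*} [SeminormedAddCommGroup H] [NormedSpace ℝ H]
    {η : ℝ} (hη : 0 ≤ η) (u v : H) :
    ‖η • (2 • u - v)‖ ≤ η * (‖u‖ + ‖u - v‖) := by
  rw [norm_smul, Real.norm_of_nonneg hη, two_nsmul, add_sub_assoc]
  gcongr
  exact norm_add_le _ _

section OptimisticGradient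

variable {H : Type*} [SeminormedAddCommGroup H] [NormedSpace ℝ H] {F : H → H} {L η : ℝ}
  {z : ℤ → H}

theorem ogda_norm_sub_le_of_norm_sub_le (hL : 0 ≤ L) (hη : 0 ≤ η) (hLη : L * η ≤ 1 / 8)
    (hlip : ∀ x y : H, ‖F x - F y‖ ≤ L * ‖x - y‖) {t : ℤ}
    (hrec : z (t + 1) = z t - η • (2 • F (z t) - F (z (t - 1))))
    (hd : ‖z t - z (t - 1)‖ ≤ (1 + 8 * L * η) * η * ‖F (z (t - 1))‖) :
    ‖z (t + 1) - z t‖ ≤ (1 + 8 * L * η) * η * ‖F (z t)‖ := by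
  have hc : 1 + 8 * L * η ≤ 2 := by linarith
  have hratio : ‖F (z (t - 1))‖ ≤ 2 * ‖F (z t)‖ :=
    norm_le_two_mul_of_norm_sub_le hL (hlip _ _) hd (by nlinarith [mul_nonneg hL hη])
  have hd' : ‖z t - z (t - 1)‖ ≤ 4 * η * ‖F (z t)‖ :=
    calc ‖z t - z (t - 1)‖ ≤ (1 + 8 * L * η) * η * ‖F (z (t - 1))‖ := hd
      _ ≤ 2 * η * (2 * ‖F (z t)‖) := by gcongr
      _ = 4 * η * ‖F (z t)‖ := by ring
  calc ‖z (t + 1) - z t‖ ≤ η * (‖F (z t)‖ + ‖F (z t) - F (z (t - 1))‖) := by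
        rw [hrec, sub_sub_cancel_left, norm_neg]; exact norm_smul_two_nsmul_sub_le hη _ _
    _ ≤ η * (‖F (z t)‖ + L * (4 * η * ‖F (z t)‖)) := by
        gcongr; exact (hlip _ _).trans (by gcongr)
    _ = (1 + 4 * L * η) * η * ‖F (z t)‖ := by ring
    _ ≤ (1 + 8 * L * η) * η * ‖F (z t)‖ := by gcongr; linarith [mul_nonneg hL hη]

theorem ogda_norm_sub_le (hL : 0 ≤ L) (hη : 0 ≤ η) (hLη : L * η ≤ 1 / 8)
    (hlip : ∀ x y : H, ‖F x - F y‖ ≤ L * ‖x - y‖) (hz : z 0 = z 1)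
    (hrec : ∀ t : ℤ, 1 ≤ t → z (t + 1) = z t - η • (2 • F (z t) - F (z (t - 1))))
    {t : ℤ} (ht : 2 ≤ t) :
    ‖z t - z (t - 1)‖ ≤ (1 + 8 * L * η) * η * ‖F (z (t - 1))‖ := by
  induction t, ht using Int.leInduction with
  | base =>
    have hz1 : z 1 - z (1 - 1) = 0 := by rw [sub_self, hz, sub_self]
    have hstep := ogda_norm_sub_le_of_norm_sub_le hL hη hLη hlip (hrec 1 le_rfl)
      (by rw [hz1, norm_zero]; positivity)
    simpa using hstep
  | succ t ht ih =>
    simpa using ogda_norm_sub_le_of_norm_sub_le hL hη hLη hlip (hrec t (by omega)) ih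

end OptimisticGradient

theorem ogda_step_length_bound {H : Type*} [NormedAddCommGroup H]
    [InnerProductSpace ℝ H] (F : H → H) (L η : ℝ) (hL : 0 < L)
    (hlip : ∀ x y : H, ‖F x - F y‖ ≤ L * ‖x - y‖)
    (hη0 : 0 < η) (hη : η ≤ 1 / (20 * L)) (z : ℤ → H)
    (hinit : z (-1) = z 0 ∧ z 0 = z 1)
    (hrec : ∀ t : ℤ, 1 ≤ t → z (t + 1) = z t - η • (2 • F (z t) - F (z (t - 1)))) :
    ∀ t : ℤ, 2 ≤ t →
      ‖z t - z (t - 1)‖ ≤ (1 + 8 * L * η) * η * ‖F (z (t - 1))‖ ∧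
        (1 + 8 * L * η) * η * ‖F (z (t - 1))‖ ≤ 2 * η * ‖F (z (t - 1))‖ := by
  have hLη : L * η ≤ 1 / 20 := by
    rw [le_div_iff₀ (by positivity)] at hη
    linarith
  intro t ht
  refine ⟨ogda_norm_sub_le hL.le hη0.le (by linarith) hlip hinit.2 hrec ht, ?_⟩
  gcongr
  linarith
end
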